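/- In M_n(ℂ) with normalized trace τ, the sesquilinear form on M_n(ℂ) ⊗ M_n(ℂ) defined on elementary tensors by ⟪a⊗b, c⊗d⟫ = τ(c* a b d*) is positive semidefinite, i.e., ⟪ξ, ξ⟫ ≥ 0 for every ξ ∈ M_n(ℂ) ⊗ M_n(ℂ). -/

import Mathlib

open TensorProduct ComplexOrder Matrix

/-! On elementary tensors `⟪a ⊗ b, c ⊗ d⟫ = τ((a b)(c d)*)` by cyclicity of the trace, so
`⟪ξ, η⟫ = τ(m ξ · (m η)*)` with `m : a ⊗ b ↦ a b` the multiplication map; in particular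
`⟪ξ, ξ⟫ = τ(x x*) ≥ 0` for `x = m ξ`. -/

theorem TensorProduct.sesq_apply_eq_mul'_mul_star_mul' {R A M : Type*} [CommSemiring R]
    [StarRing R] [Semiring A] [Algebra R A] [StarRing A] [AddCommMonoid M] [Module R M]
    (B : A ⊗[R] A →ₗ[R] A ⊗[R] A →ₗ⋆[R] M)
    (φ : A →ₗ[R] M) (hB : ∀ a b c d : A, B (a ⊗ₜ b) (c ⊗ₜ d) = φ (a * b * star (c * d)))
    (ξ η : A ⊗[R] A) : B ξ η = φ (LinearMap.mul' R A ξ * star (LinearMap.mul' R A η)) := by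
  induction ξ using TensorProduct.induction_on with
  | zero => simp
  | add x y hx hy => simp only [map_add, LinearMap.add_apply, hx, hy, add_mul]
  | tmul a b =>
    induction η using TensorProduct.induction_on with
    | zero => simp
    | add x y hx hy => simp only [map_add, hx, hy, star_add, mul_add]
    | tmul c d => simp only [hB, LinearMap.mul'_apply]

theorem Matrix.trace_star_mul_mul_star {n R : Type*} [Fintype n] [CommSemiring R] [StarRing R]
    (a b c d : Matrix n n R) :
    (star c * a * b * star d).trace = (a * b * star (c * d)).trace := by
  rw [mul_assoc, mul_assoc, trace_mul_comm, star_mul, ← mul_assoc, ← mul_assoc]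

/-- the sesquilinear form on Mₙ(ℂ) ⊗ Mₙ(ℂ) determined on elementary
tensors by ⟪a⊗b, c⊗d⟫ = τ(c* a b d*) (τ the normalized trace) is positive
semidefinite. -/
theorem tensor_trace_form_positive {n : ℕ}
    (B : (Matrix (Fin n) (Fin n) ℂ ⊗[ℂ] Matrix (Fin n) (Fin n) ℂ) →ₗ[ℂ]
         (Matrix (Fin n) (Fin n) ℂ ⊗[ℂ] Matrix (Fin n) (Fin n) ℂ) →ₗ⋆[ℂ] ℂ)
    (hB : ∀ a b c d : Matrix (Fin n) (Fin n) ℂ,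
      B (a ⊗ₜ[ℂ] b) (c ⊗ₜ[ℂ] d) = (star c * a * b * star d).trace / n) :
    ∀ ξ : Matrix (Fin n) (Fin n) ℂ ⊗[ℂ] Matrix (Fin n) (Fin n) ℂ, 0 ≤ B ξ ξ := by
  intro ξ
  let τ : Matrix (Fin n) (Fin n) ℂ →ₗ[ℂ] ℂ := (n : ℂ)⁻¹ • traceLinearMap (Fin n) ℂ ℂ
  have hτ : ∀ a b c d, B (a ⊗ₜ b) (c ⊗ₜ d) = τ (a * b * star (c * d)) := fun a b c d => by
    simp [τ, hB, trace_star_mul_mul_star, div_eq_inv_mul]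
  rw [TensorProduct.sesq_apply_eq_mul'_mul_star_mul' B τ hτ]
  exact smul_nonneg (inv_nonneg.2 (Nat.cast_nonneg (α := ℂ) n))
    (posSemidef_self_mul_conjTranspose (LinearMap.mul' ℂ _ ξ)).trace_nonneg
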